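/- arXiv:2202.01826 — 5 statements merged into one kernel-verified Lean document; each statement's English description precedes it below -/
import Mathlib

section
/- If Λ ≠ 0, then the point I* = (x*, y*, z*) is equidistant from the evader and all three pursuers: ‖I* − E‖ = ‖I* − P_1‖ = ‖I* − P_2‖ = ‖I* − P_3‖. -/
set_option linter.unusedVariables false

noncomputable section

/-- The ν coefficients. -/
def nuE (xE yE zE x1 y1 z1 x2 y2 z2 x3 y3 z3 : ℝ) : ℝ := x1*(y2-y3) + x2*(y3-y1) + x3*(y1-y2)
def nu1 (xE yE zE x1 y1 z1 x2 y2 z2 x3 y3 z3 : ℝ) : ℝ := x2*(y3-yE) + x3*(yE-y2) + xE*(y2-y3)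
def nu2 (xE yE zE x1 y1 z1 x2 y2 z2 x3 y3 z3 : ℝ) : ℝ := x3*(y1-yE) + x1*(yE-y3) + xE*(y3-y1)
def nu3 (xE yE zE x1 y1 z1 x2 y2 z2 x3 y3 z3 : ℝ) : ℝ := x1*(y2-yE) + x2*(yE-y1) + xE*(y1-y2)

/-- The μ coefficients. -/
def muE (xE yE zE x1 y1 z1 x2 y2 z2 x3 y3 z3 : ℝ) : ℝ := y1*(z2-z3) + y2*(z3-z1) + y3*(z1-z2)
def mu1 (xE yE zE x1 y1 z1 x2 y2 z2 x3 y3 z3 : ℝ) : ℝ := y2*(z3-zE) + y3*(zE-z2) + yE*(z2-z3)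
def mu2 (xE yE zE x1 y1 z1 x2 y2 z2 x3 y3 z3 : ℝ) : ℝ := y3*(z1-zE) + y1*(zE-z3) + yE*(z3-z1)
def mu3 (xE yE zE x1 y1 z1 x2 y2 z2 x3 y3 z3 : ℝ) : ℝ := y1*(z2-zE) + y2*(zE-z1) + yE*(z1-z2)

/-- The η coefficients. -/
def etaE (xE yE zE x1 y1 z1 x2 y2 z2 x3 y3 z3 : ℝ) : ℝ := x1*(z3-z2) + x2*(z1-z3) + x3*(z2-z1)
def eta1 (xE yE zE x1 y1 z1 x2 y2 z2 x3 y3 z3 : ℝ) : ℝ := x2*(zE-z3) + x3*(z2-zE) + xE*(z3-z2)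
def eta2 (xE yE zE x1 y1 z1 x2 y2 z2 x3 y3 z3 : ℝ) : ℝ := x3*(zE-z1) + x1*(z3-zE) + xE*(z1-z3)
def eta3 (xE yE zE x1 y1 z1 x2 y2 z2 x3 y3 z3 : ℝ) : ℝ := x1*(zE-z2) + x2*(z1-zE) + xE*(z2-z1)

/-- The denominator Λ. -/
def Lam (xE yE zE x1 y1 z1 x2 y2 z2 x3 y3 z3 : ℝ) : ℝ :=
  xE*(y3*z1 - y1*z3) + yE*(x1*z3 - x3*z1) + zE*(x3*y1 - x1*y3)
    - x2*(y3*(z1-zE) + y1*(zE-z3) + yE*(z3-z1))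
    - y2*(x3*(zE-z1) + x1*(z3-zE) + xE*(z1-z3))
    - z2*(x3*(y1-yE) + x1*(yE-y3) + xE*(y3-y1))

/-- Coordinates of the optimal interception point I*. -/
def xstar (xE yE zE x1 y1 z1 x2 y2 z2 x3 y3 z3 : ℝ) : ℝ :=
  (muE xE yE zE x1 y1 z1 x2 y2 z2 x3 y3 z3 * (xE^2 + yE^2 + zE^2) - mu1 xE yE zE x1 y1 z1 x2 y2 z2 x3 y3 z3 * (x1^2 + y1^2 + z1^2)
    - mu2 xE yE zE x1 y1 z1 x2 y2 z2 x3 y3 z3 * (x2^2 + y2^2 + z2^2) - mu3 xE yE zE x1 y1 z1 x2 y2 z2 x3 y3 z3 * (x3^2 + y3^2 + z3^2)) / (2 * Lam xE yE zE x1 y1 z1 x2 y2 z2 x3 y3 z3)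
def ystar (xE yE zE x1 y1 z1 x2 y2 z2 x3 y3 z3 : ℝ) : ℝ :=
  (etaE xE yE zE x1 y1 z1 x2 y2 z2 x3 y3 z3 * (xE^2 + yE^2 + zE^2) - eta1 xE yE zE x1 y1 z1 x2 y2 z2 x3 y3 z3 * (x1^2 + y1^2 + z1^2)
    - eta2 xE yE zE x1 y1 z1 x2 y2 z2 x3 y3 z3 * (x2^2 + y2^2 + z2^2) - eta3 xE yE zE x1 y1 z1 x2 y2 z2 x3 y3 z3 * (x3^2 + y3^2 + z3^2)) / (2 * Lam xE yE zE x1 y1 z1 x2 y2 z2 x3 y3 z3)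
def zstar (xE yE zE x1 y1 z1 x2 y2 z2 x3 y3 z3 : ℝ) : ℝ :=
  (nuE xE yE zE x1 y1 z1 x2 y2 z2 x3 y3 z3 * (xE^2 + yE^2 + zE^2) - nu1 xE yE zE x1 y1 z1 x2 y2 z2 x3 y3 z3 * (x1^2 + y1^2 + z1^2)
    - nu2 xE yE zE x1 y1 z1 x2 y2 z2 x3 y3 z3 * (x2^2 + y2^2 + z2^2) - nu3 xE yE zE x1 y1 z1 x2 y2 z2 x3 y3 z3 * (x3^2 + y3^2 + z3^2)) / (2 * Lam xE yE zE x1 y1 z1 x2 y2 z2 x3 y3 z3)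

/-- A point of ℝ³ (with the Euclidean norm) from its three coordinates. -/
def pt (a b c : ℝ) : EuclideanSpace ℝ (Fin 3) := WithLp.toLp 2 ![a, b, c]

/-- The optimal interception point I* as a point of ℝ³. -/
def Istar (xE yE zE x1 y1 z1 x2 y2 z2 x3 y3 z3 : ℝ) : EuclideanSpace ℝ (Fin 3) := pt (xstar xE yE zE x1 y1 z1 x2 y2 z2 x3 y3 z3) (ystar xE yE zE x1 y1 z1 x2 y2 z2 x3 y3 z3) (zstar xE yE zE x1 y1 z1 x2 y2 z2 x3 y3 z3)

/-- The separating planes H_i, evaluated at a point (x, y, z). -/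
def H1 (xE yE zE x1 y1 z1 x2 y2 z2 x3 y3 z3 : ℝ) (x y z : ℝ) : ℝ :=
  (xE-x1)*x + (yE-y1)*y + (zE-z1)*z - ((xE^2 + yE^2 + zE^2) - (x1^2 + y1^2 + z1^2))/2
def H2 (xE yE zE x1 y1 z1 x2 y2 z2 x3 y3 z3 : ℝ) (x y z : ℝ) : ℝ :=
  (xE-x2)*x + (yE-y2)*y + (zE-z2)*z - ((xE^2 + yE^2 + zE^2) - (x2^2 + y2^2 + z2^2))/2
def H3 (xE yE zE x1 y1 z1 x2 y2 z2 x3 y3 z3 : ℝ) (x y z : ℝ) : ℝ :=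
  (xE-x3)*x + (yE-y3)*y + (zE-z3)*z - ((xE^2 + yE^2 + zE^2) - (x3^2 + y3^2 + z3^2))/2

/-- The Value function of the game. -/
def Vval (xE yE zE x1 y1 z1 x2 y2 z2 x3 y3 z3 : ℝ) : ℝ := zstar xE yE zE x1 y1 z1 x2 y2 z2 x3 y3 z3

/-- Center coordinates (a, b) of the barrier sphere (pursuer data only). -/
def aB (x1 y1 z1 x2 y2 z2 x3 y3 z3 : ℝ) : ℝ :=
  (1/2) * ((y2-y3)*(x1^2 + y1^2 + z1^2) + (y3-y1)*(x2^2 + y2^2 + z2^2) + (y1-y2)*(x3^2 + y3^2 + z3^2))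
    / (x1*(y2-y3) + x2*(y3-y1) + x3*(y1-y2))
def bB (x1 y1 z1 x2 y2 z2 x3 y3 z3 : ℝ) : ℝ :=
  (1/2) * ((x3-x2)*(x1^2 + y1^2 + z1^2) + (x1-x3)*(x2^2 + y2^2 + z2^2) + (x2-x1)*(x3^2 + y3^2 + z3^2))
    / (x1*(y2-y3) + x2*(y3-y1) + x3*(y1-y2))

/-- The Barrier function B(x). -/
def Bfun (xE yE zE x1 y1 z1 x2 y2 z2 x3 y3 z3 : ℝ) : ℝ :=
  (xE - aB x1 y1 z1 x2 y2 z2 x3 y3 z3)^2 + (yE - bB x1 y1 z1 x2 y2 z2 x3 y3 z3)^2 + zE^2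
    - (x1 - aB x1 y1 z1 x2 y2 z2 x3 y3 z3)^2 - (y1 - bB x1 y1 z1 x2 y2 z2 x3 y3 z3)^2 - z1^2

end

lemma plane_aux (X Y Z a b c d e f : ℝ)
    (h : (a-d)*X + (b-e)*Y + (c-f)*Z = ((a^2+b^2+c^2) - (d^2+e^2+f^2))/2) :
    (X-a)^2 + (Y-b)^2 + (Z-c)^2 = (X-d)^2 + (Y-e)^2 + (Z-f)^2 := by
  linear_combination -2*h

lemma pt_norm (a b c d e f : ℝ) :
    ‖pt a b c - pt d e f‖ = Real.sqrt ((a-d)^2 + (b-e)^2 + (c-f)^2) := by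
  rw [EuclideanSpace.norm_eq]
  congr 1
  rw [Fin.sum_univ_three]
  simp [pt]

set_option maxRecDepth 100000 in
/-- if Λ ≠ 0 then I* is equidistant from the evader and all three pursuers:
‖I* − E‖ = ‖I* − P₁‖ = ‖I* − P₂‖ = ‖I* − P₃‖. -/
theorem statement3 (xE yE zE x1 y1 z1 x2 y2 z2 x3 y3 z3 : ℝ) (hΛ : Lam xE yE zE x1 y1 z1 x2 y2 z2 x3 y3 z3 ≠ 0) :
    ‖Istar xE yE zE x1 y1 z1 x2 y2 z2 x3 y3 z3 - pt xE yE zE‖ = ‖Istar xE yE zE x1 y1 z1 x2 y2 z2 x3 y3 z3 - pt x1 y1 z1‖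
    ∧ ‖Istar xE yE zE x1 y1 z1 x2 y2 z2 x3 y3 z3 - pt xE yE zE‖ = ‖Istar xE yE zE x1 y1 z1 x2 y2 z2 x3 y3 z3 - pt x2 y2 z2‖
    ∧ ‖Istar xE yE zE x1 y1 z1 x2 y2 z2 x3 y3 z3 - pt xE yE zE‖ = ‖Istar xE yE zE x1 y1 z1 x2 y2 z2 x3 y3 z3 - pt x3 y3 z3‖ := by
  simp only [Istar, pt_norm]
  refine ⟨?_, ?_, ?_⟩ <;>
  · congr 1
    apply plane_aux
    simp only [xstar, ystar, zstar, nuE, nu1, nu2, nu3, muE, mu1, mu2, mu3,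
      etaE, eta1, eta2, eta3] at *
    field_simp
    simp only [Lam]
    ring
end

section
/- Viewing the Value function V(x) = (ν_E R_E² − ν_1 R_1² − ν_2 R_2² − ν_3 R_3²)/(2Λ) as a real-valued function of the 12 coordinates (x_E,y_E,z_E,x_1,y_1,z_1,x_2,y_2,z_2,x_3,y_3,z_3), at every state where Λ ≠ 0 its partial gradient with respect to the coordinates (x_i, y_i, z_i) of pursuer P_i equals −(ν_i/Λ)·(x_i − x*, y_i − y*, z_i − z*) for each i = 1,2,3, where (x*, y*, z*) is the intersection point I*. -/
set_option maxHeartbeats 1000000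


set_option linter.unusedVariables false

section AuxGradient

lemma pt_app0 (a b c : ℝ) : pt a b c 0 = a := rfl
lemma pt_app1 (a b c : ℝ) : pt a b c 1 = b := rfl
lemma pt_app2 (a b c : ℝ) : pt a b c 2 = c := rfl

lemma proj_single (i j : Fin 3) :
    (EuclideanSpace.proj i : EuclideanSpace ℝ (Fin 3) →L[ℝ] ℝ) (EuclideanSpace.single j 1)
      = if i = j then 1 else 0 := by
  simp [EuclideanSpace.single_apply]

lemma clm_ext3 {f g : EuclideanSpace ℝ (Fin 3) →L[ℝ] ℝ}
    (h : ∀ i, f (EuclideanSpace.single i 1) = g (EuclideanSpace.single i 1)) : f = g := by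
  apply ContinuousLinearMap.coe_injective
  apply Module.Basis.ext ((EuclideanSpace.basisFun (Fin 3) ℝ).toBasis)
  intro i
  simpa [EuclideanSpace.basisFun_apply] using h i

lemma toDual_single (g : EuclideanSpace ℝ (Fin 3)) (i : Fin 3) :
    (InnerProductSpace.toDual ℝ (EuclideanSpace ℝ (Fin 3)) g) (EuclideanSpace.single i 1) = g i := by
  simp [InnerProductSpace.toDual_apply_apply, EuclideanSpace.inner_single_right]

lemma hasGradientAt_div3 {A B : EuclideanSpace ℝ (Fin 3) → ℝ}
    {A' B' : EuclideanSpace ℝ (Fin 3) →L[ℝ] ℝ} {x : EuclideanSpace ℝ (Fin 3)}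
    (g : EuclideanSpace ℝ (Fin 3)) (a b : ℝ)
    (hA : HasFDerivAt A A' x) (hB : HasFDerivAt B B' x)
    (hax : A x = a) (hbx : B x = b) (hb : b ≠ 0)
    (hg : ∀ i, g i = (A' (EuclideanSpace.single i 1) * b
        - a * B' (EuclideanSpace.single i 1)) / b^2) :
    HasGradientAt (fun p => A p / B p) g x := by
  have hB0 : B x ≠ 0 := hbx ▸ hb
  have hinv : HasFDerivAt (fun p => (B p)⁻¹)
      ((ContinuousLinearMap.smulRight (1 : ℝ →L[ℝ] ℝ) (-((B x) ^ 2)⁻¹)).comp B') x :=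
    (hasFDerivAt_inv hB0).comp x hB
  have hmul := hA.mul hinv
  have heq : (fun p => A p / B p) = fun p => A p * (B p)⁻¹ := by
    funext p; rw [div_eq_mul_inv]
  rw [hasGradientAt_iff_hasFDerivAt, heq]
  refine HasFDerivAt.congr_fderiv hmul (Eq.symm ?_)
  apply clm_ext3
  intro i
  rw [toDual_single, hg i]
  simp only [ContinuousLinearMap.add_apply, ContinuousLinearMap.smul_apply,
    ContinuousLinearMap.comp_apply, ContinuousLinearMap.smulRight_apply,
    ContinuousLinearMap.one_apply, smul_eq_mul, hax, hbx]
  field_simp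
  ring


lemma ps00 : (EuclideanSpace.proj 0 : EuclideanSpace ℝ (Fin 3) →L[ℝ] ℝ) (EuclideanSpace.single 0 1) = 1 := by rw [proj_single, if_pos rfl]
lemma ps01 : (EuclideanSpace.proj 0 : EuclideanSpace ℝ (Fin 3) →L[ℝ] ℝ) (EuclideanSpace.single 1 1) = 0 := by rw [proj_single, if_neg (by decide)]
lemma ps02 : (EuclideanSpace.proj 0 : EuclideanSpace ℝ (Fin 3) →L[ℝ] ℝ) (EuclideanSpace.single 2 1) = 0 := by rw [proj_single, if_neg (by decide)]
lemma ps10 : (EuclideanSpace.proj 1 : EuclideanSpace ℝ (Fin 3) →L[ℝ] ℝ) (EuclideanSpace.single 0 1) = 0 := by rw [proj_single, if_neg (by decide)]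
lemma ps11 : (EuclideanSpace.proj 1 : EuclideanSpace ℝ (Fin 3) →L[ℝ] ℝ) (EuclideanSpace.single 1 1) = 1 := by rw [proj_single, if_pos rfl]
lemma ps12 : (EuclideanSpace.proj 1 : EuclideanSpace ℝ (Fin 3) →L[ℝ] ℝ) (EuclideanSpace.single 2 1) = 0 := by rw [proj_single, if_neg (by decide)]
lemma ps20 : (EuclideanSpace.proj 2 : EuclideanSpace ℝ (Fin 3) →L[ℝ] ℝ) (EuclideanSpace.single 0 1) = 0 := by rw [proj_single, if_neg (by decide)]
lemma ps21 : (EuclideanSpace.proj 2 : EuclideanSpace ℝ (Fin 3) →L[ℝ] ℝ) (EuclideanSpace.single 1 1) = 0 := by rw [proj_single, if_neg (by decide)]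
lemma ps22 : (EuclideanSpace.proj 2 : EuclideanSpace ℝ (Fin 3) →L[ℝ] ℝ) (EuclideanSpace.single 2 1) = 1 := by rw [proj_single, if_pos rfl]

lemma fin_mk_two (h : 2 < 3) : (⟨2, h⟩ : Fin 3) = 2 := rfl

lemma aux_lhs (n L M t : ℝ) (hL : L ≠ 0) :
    -(n / L) * (t - M / (2 * L)) * (2 * L)^2 = n * (2*M) - n * (4*L*t) := by
  field_simp; ring

lemma grad1 (xE yE zE x1 y1 z1 x2 y2 z2 x3 y3 z3 : ℝ)
    (hΛ : Lam xE yE zE x1 y1 z1 x2 y2 z2 x3 y3 z3 ≠ 0) :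
    HasGradientAt
      (fun p : EuclideanSpace ℝ (Fin 3) =>
        Vval xE yE zE (p 0) (p 1) (p 2) x2 y2 z2 x3 y3 z3)
      (-(nu1 xE yE zE x1 y1 z1 x2 y2 z2 x3 y3 z3 / Lam xE yE zE x1 y1 z1 x2 y2 z2 x3 y3 z3) • (pt x1 y1 z1 - Istar xE yE zE x1 y1 z1 x2 y2 z2 x3 y3 z3))
      (pt x1 y1 z1) := by
  have h0 : HasFDerivAt (fun p : EuclideanSpace ℝ (Fin 3) => p 0)
      (EuclideanSpace.proj 0 : EuclideanSpace ℝ (Fin 3) →L[ℝ] ℝ) (pt x1 y1 z1) :=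
    (EuclideanSpace.proj 0 : EuclideanSpace ℝ (Fin 3) →L[ℝ] ℝ).hasFDerivAt
  have h1 : HasFDerivAt (fun p : EuclideanSpace ℝ (Fin 3) => p 1)
      (EuclideanSpace.proj 1 : EuclideanSpace ℝ (Fin 3) →L[ℝ] ℝ) (pt x1 y1 z1) :=
    (EuclideanSpace.proj 1 : EuclideanSpace ℝ (Fin 3) →L[ℝ] ℝ).hasFDerivAt
  have h2 : HasFDerivAt (fun p : EuclideanSpace ℝ (Fin 3) => p 2)
      (EuclideanSpace.proj 2 : EuclideanSpace ℝ (Fin 3) →L[ℝ] ℝ) (pt x1 y1 z1) :=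
    (EuclideanSpace.proj 2 : EuclideanSpace ℝ (Fin 3) →L[ℝ] ℝ).hasFDerivAt
  have hA1 := ((h0.mul_const (y2 - y3)).add
      (((hasFDerivAt_const y3 (pt x1 y1 z1)).sub h1).const_mul x2)).add
      ((h1.sub (hasFDerivAt_const y2 (pt x1 y1 z1))).const_mul x3)
  have hA2 := ((h0.mul h0).add (h1.mul h1)).add (h2.mul h2)
  have hA3 := (((h1.sub (hasFDerivAt_const yE (pt x1 y1 z1))).const_mul x3).add
      (h0.mul_const (yE - y3))).add
      (((hasFDerivAt_const y3 (pt x1 y1 z1)).sub h1).const_mul xE)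
  have hA4 := ((h0.mul_const (y2 - yE)).add
      (((hasFDerivAt_const yE (pt x1 y1 z1)).sub h1).const_mul x2)).add
      ((h1.sub (hasFDerivAt_const y2 (pt x1 y1 z1))).const_mul xE)
  have hA := (((hA1.mul_const (xE^2 + yE^2 + zE^2)).sub
      (hA2.const_mul (x2*(y3-yE) + x3*(yE-y2) + xE*(y2-y3)))).sub
      (hA3.mul_const (x2^2 + y2^2 + z2^2))).sub
      (hA4.mul_const (x3^2 + y3^2 + z3^2))
  have hB1 := ((((h2.const_mul y3).sub (h1.mul_const z3)).const_mul xE).add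
      (((h0.mul_const z3).sub (h2.const_mul x3)).const_mul yE)).add
      (((h1.const_mul x3).sub (h0.mul_const y3)).const_mul zE)
  have hB4 := (((h2.sub (hasFDerivAt_const zE (pt x1 y1 z1))).const_mul y3).add
      (h1.mul_const (zE - z3))).add
      (((hasFDerivAt_const z3 (pt x1 y1 z1)).sub h2).const_mul yE)
  have hB5 := ((((hasFDerivAt_const zE (pt x1 y1 z1)).sub h2).const_mul x3).add
      (h0.mul_const (z3 - zE))).add
      ((h2.sub (hasFDerivAt_const z3 (pt x1 y1 z1))).const_mul xE)
  have hB6 := (((h1.sub (hasFDerivAt_const yE (pt x1 y1 z1))).const_mul x3).add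
      (h0.mul_const (yE - y3))).add
      (((hasFDerivAt_const y3 (pt x1 y1 z1)).sub h1).const_mul xE)
  have hB2 := (((hB1.sub (hB4.const_mul x2)).sub (hB5.const_mul y2)).sub
      (hB6.const_mul z2)).const_mul (2:ℝ)
  have key := hasGradientAt_div3
    (-(nu1 xE yE zE x1 y1 z1 x2 y2 z2 x3 y3 z3 / Lam xE yE zE x1 y1 z1 x2 y2 z2 x3 y3 z3) • (pt x1 y1 z1 - Istar xE yE zE x1 y1 z1 x2 y2 z2 x3 y3 z3))
    (nuE xE yE zE x1 y1 z1 x2 y2 z2 x3 y3 z3 * (xE^2 + yE^2 + zE^2)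
      - nu1 xE yE zE x1 y1 z1 x2 y2 z2 x3 y3 z3 * (x1^2 + y1^2 + z1^2)
      - nu2 xE yE zE x1 y1 z1 x2 y2 z2 x3 y3 z3 * (x2^2 + y2^2 + z2^2)
      - nu3 xE yE zE x1 y1 z1 x2 y2 z2 x3 y3 z3 * (x3^2 + y3^2 + z3^2))
    (2 * Lam xE yE zE x1 y1 z1 x2 y2 z2 x3 y3 z3)
    hA hB2 ?hax ?hbx (mul_ne_zero two_ne_zero hΛ) ?hg
  case hax =>
    simp only [Pi.add_apply, Pi.sub_apply, Pi.mul_apply, pt_app0, pt_app1, pt_app2, nuE, nu1, nu2, nu3]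
    ring
  case hbx =>
    simp only [Pi.add_apply, Pi.sub_apply, Pi.mul_apply, pt_app0, pt_app1, pt_app2, Lam]
    try ring
  case hg =>
    intro i
    fin_cases i
    · simp only [Fin.mk_zero, Fin.mk_one, Fin.isValue, ContinuousLinearMap.add_apply,
        ContinuousLinearMap.sub_apply, ContinuousLinearMap.smul_apply,
        ContinuousLinearMap.neg_apply, ContinuousLinearMap.zero_apply, smul_eq_mul,
        ps00, ps01, ps02, ps10, ps11, ps12, ps20, ps21, ps22,
        pt_app0, pt_app1, pt_app2, PiLp.smul_apply, PiLp.sub_apply,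
        Istar, xstar, mul_one, mul_zero, zero_mul, one_mul, sub_zero, zero_sub,
        add_zero, zero_add, neg_neg]
      rw [eq_div_iff (pow_ne_zero 2 (mul_ne_zero two_ne_zero hΛ))]
      rw [aux_lhs _ _ _ _ hΛ]
      simp only [nuE, nu1, nu2, nu3, muE, mu1, mu2, mu3, Lam]
      ring
    · simp only [Fin.mk_zero, Fin.mk_one, fin_mk_two, Fin.isValue, ContinuousLinearMap.add_apply,
        ContinuousLinearMap.sub_apply, ContinuousLinearMap.smul_apply,
        ContinuousLinearMap.neg_apply, ContinuousLinearMap.zero_apply, smul_eq_mul,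
        ps00, ps01, ps02, ps10, ps11, ps12, ps20, ps21, ps22,
        pt_app0, pt_app1, pt_app2, PiLp.smul_apply, PiLp.sub_apply,
        Istar, xstar, ystar, zstar, mul_one, mul_zero, zero_mul, one_mul, sub_zero, zero_sub,
        add_zero, zero_add, neg_neg]
      rw [eq_div_iff (pow_ne_zero 2 (mul_ne_zero two_ne_zero hΛ))]
      rw [aux_lhs _ _ _ _ hΛ]
      simp only [nuE, nu1, nu2, nu3, muE, mu1, mu2, mu3, etaE, eta1, eta2, eta3, Lam]
      ring
    · simp only [Fin.mk_zero, Fin.mk_one, fin_mk_two, Fin.isValue, ContinuousLinearMap.add_apply,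
        ContinuousLinearMap.sub_apply, ContinuousLinearMap.smul_apply,
        ContinuousLinearMap.neg_apply, ContinuousLinearMap.zero_apply, smul_eq_mul,
        ps00, ps01, ps02, ps10, ps11, ps12, ps20, ps21, ps22,
        pt_app0, pt_app1, pt_app2, PiLp.smul_apply, PiLp.sub_apply,
        Istar, xstar, ystar, zstar, mul_one, mul_zero, zero_mul, one_mul, sub_zero, zero_sub,
        add_zero, zero_add, neg_neg]
      rw [eq_div_iff (pow_ne_zero 2 (mul_ne_zero two_ne_zero hΛ))]
      rw [aux_lhs _ _ _ _ hΛ]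
      simp only [nuE, nu1, nu2, nu3, muE, mu1, mu2, mu3, etaE, eta1, eta2, eta3, Lam]
      ring
  · convert key using 1
    funext p
    simp only [Pi.add_apply, Pi.sub_apply, Pi.mul_apply, Vval, zstar, nuE, nu1, nu2, nu3, Lam]
    congr 1 <;> ring

lemma Lam_cyc (xE yE zE a1 b1 c1 a2 b2 c2 a3 b3 c3 : ℝ) :
    Lam xE yE zE a2 b2 c2 a3 b3 c3 a1 b1 c1 = Lam xE yE zE a1 b1 c1 a2 b2 c2 a3 b3 c3 := by
  simp only [Lam]; ring

lemma nu1_cyc (xE yE zE a1 b1 c1 a2 b2 c2 a3 b3 c3 : ℝ) :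
    nu1 xE yE zE a2 b2 c2 a3 b3 c3 a1 b1 c1 = nu2 xE yE zE a1 b1 c1 a2 b2 c2 a3 b3 c3 := by
  simp only [nu1, nu2]; try ring

lemma nu2_cyc (xE yE zE a1 b1 c1 a2 b2 c2 a3 b3 c3 : ℝ) :
    nu2 xE yE zE a2 b2 c2 a3 b3 c3 a1 b1 c1 = nu3 xE yE zE a1 b1 c1 a2 b2 c2 a3 b3 c3 := by
  simp only [nu2, nu3]; try ring

lemma xstar_cyc (xE yE zE a1 b1 c1 a2 b2 c2 a3 b3 c3 : ℝ) :
    xstar xE yE zE a2 b2 c2 a3 b3 c3 a1 b1 c1 = xstar xE yE zE a1 b1 c1 a2 b2 c2 a3 b3 c3 := by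
  unfold xstar
  rw [Lam_cyc]
  congr 1
  simp only [muE, mu1, mu2, mu3]; ring

lemma ystar_cyc (xE yE zE a1 b1 c1 a2 b2 c2 a3 b3 c3 : ℝ) :
    ystar xE yE zE a2 b2 c2 a3 b3 c3 a1 b1 c1 = ystar xE yE zE a1 b1 c1 a2 b2 c2 a3 b3 c3 := by
  unfold ystar
  rw [Lam_cyc]
  congr 1
  simp only [etaE, eta1, eta2, eta3]; ring

lemma zstar_cyc (xE yE zE a1 b1 c1 a2 b2 c2 a3 b3 c3 : ℝ) :
    zstar xE yE zE a2 b2 c2 a3 b3 c3 a1 b1 c1 = zstar xE yE zE a1 b1 c1 a2 b2 c2 a3 b3 c3 := by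
  unfold zstar
  rw [Lam_cyc]
  congr 1
  simp only [nuE, nu1, nu2, nu3]; ring

lemma Vval_cyc (xE yE zE a1 b1 c1 a2 b2 c2 a3 b3 c3 : ℝ) :
    Vval xE yE zE a2 b2 c2 a3 b3 c3 a1 b1 c1 = Vval xE yE zE a1 b1 c1 a2 b2 c2 a3 b3 c3 := by
  unfold Vval; exact zstar_cyc _ _ _ _ _ _ _ _ _ _ _ _

lemma Istar_cyc (xE yE zE a1 b1 c1 a2 b2 c2 a3 b3 c3 : ℝ) :
    Istar xE yE zE a2 b2 c2 a3 b3 c3 a1 b1 c1 = Istar xE yE zE a1 b1 c1 a2 b2 c2 a3 b3 c3 := by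
  unfold Istar
  rw [xstar_cyc, ystar_cyc, zstar_cyc]

end AuxGradient


/-- at every state with Λ ≠ 0, the partial gradient of the Value function with
respect to the coordinates of pursuer P_i equals −(ν_i/Λ)·(P_i − I*), for each i = 1,2,3. -/
theorem statement8 (xE yE zE x1 y1 z1 x2 y2 z2 x3 y3 z3 : ℝ) (hΛ : Lam xE yE zE x1 y1 z1 x2 y2 z2 x3 y3 z3 ≠ 0) :
    HasGradientAt
      (fun p : EuclideanSpace ℝ (Fin 3) =>
        Vval xE yE zE (p 0) (p 1) (p 2) x2 y2 z2 x3 y3 z3)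
      (-(nu1 xE yE zE x1 y1 z1 x2 y2 z2 x3 y3 z3 / Lam xE yE zE x1 y1 z1 x2 y2 z2 x3 y3 z3) • (pt x1 y1 z1 - Istar xE yE zE x1 y1 z1 x2 y2 z2 x3 y3 z3))
      (pt x1 y1 z1)
    ∧ HasGradientAt
      (fun p : EuclideanSpace ℝ (Fin 3) =>
        Vval xE yE zE x1 y1 z1 (p 0) (p 1) (p 2) x3 y3 z3)
      (-(nu2 xE yE zE x1 y1 z1 x2 y2 z2 x3 y3 z3 / Lam xE yE zE x1 y1 z1 x2 y2 z2 x3 y3 z3) • (pt x2 y2 z2 - Istar xE yE zE x1 y1 z1 x2 y2 z2 x3 y3 z3))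
      (pt x2 y2 z2)
    ∧ HasGradientAt
      (fun p : EuclideanSpace ℝ (Fin 3) =>
        Vval xE yE zE x1 y1 z1 x2 y2 z2 (p 0) (p 1) (p 2))
      (-(nu3 xE yE zE x1 y1 z1 x2 y2 z2 x3 y3 z3 / Lam xE yE zE x1 y1 z1 x2 y2 z2 x3 y3 z3) • (pt x3 y3 z3 - Istar xE yE zE x1 y1 z1 x2 y2 z2 x3 y3 z3))
      (pt x3 y3 z3) := by
  refine ⟨grad1 xE yE zE x1 y1 z1 x2 y2 z2 x3 y3 z3 hΛ, ?_, ?_⟩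
  · have h := grad1 xE yE zE x2 y2 z2 x3 y3 z3 x1 y1 z1 (by rw [Lam_cyc]; exact hΛ)
    rw [Istar_cyc, nu1_cyc, Lam_cyc] at h
    have hf : (fun p : EuclideanSpace ℝ (Fin 3) => Vval xE yE zE (p 0) (p 1) (p 2) x3 y3 z3 x1 y1 z1)
        = fun p : EuclideanSpace ℝ (Fin 3) => Vval xE yE zE x1 y1 z1 (p 0) (p 1) (p 2) x3 y3 z3 := by
      funext p; rw [Vval_cyc]
    rw [hf] at h
    exact h
  · have h := grad1 xE yE zE x3 y3 z3 x1 y1 z1 x2 y2 z2 (by rw [Lam_cyc, Lam_cyc]; exact hΛ)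
    rw [Istar_cyc, Istar_cyc, nu1_cyc, nu2_cyc, Lam_cyc, Lam_cyc] at h
    have hf : (fun p : EuclideanSpace ℝ (Fin 3) => Vval xE yE zE (p 0) (p 1) (p 2) x1 y1 z1 x2 y2 z2)
        = fun p : EuclideanSpace ℝ (Fin 3) => Vval xE yE zE x1 y1 z1 x2 y2 z2 (p 0) (p 1) (p 2) := by
      funext p; rw [Vval_cyc, Vval_cyc]
    rw [hf] at h
    exact h
end

section
/- (Stationarity of the Value function under optimal play / HJI equation.) Suppose Λ ≠ 0 and the intersection point I* = (x*,y*,z*) is distinct from E, P_1, P_2 and P_3, and let d_E = ‖I* − E‖ and d_i = ‖I* − P_i‖ for i = 1,2,3. Let u*_E = (I* − E)/d_E and u*_i = (I* − P_i)/d_i be the optimal unit controls. Then the derivative of the Value function V in the joint direction (u*_E, u*_1, u*_2, u*_3) ∈ ℝ¹² is zero: (∇_E V)·u*_E + Σ_{i=1}^{3} (∇_{P_i} V)·u*_i = 0, where ∇_E V = (ν_E/Λ)(E − I*) and ∇_{P_i} V = −(ν_i/Λ)(P_i − I*). -/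
set_option linter.unusedVariables false

noncomputable section

lemma pt_sub' (a b c a' b' c' : ℝ) : pt a b c - pt a' b' c' = pt (a-a') (b-b') (c-c') := by
  ext i; fin_cases i <;> simp [pt]

lemma pt_norm_sq' (a b c : ℝ) : ‖pt a b c‖^2 = a^2 + b^2 + c^2 := by
  rw [← real_inner_self_eq_norm_sq]
  simp only [pt, PiLp.inner_apply, Fin.sum_univ_three]
  simp

lemma inner_pt' (a b c a' b' c' : ℝ) : (inner ℝ (pt a b c) (pt a' b' c') : ℝ) = a*a' + b*b' + c*c' := by
  simp [pt, PiLp.inner_apply, Fin.sum_univ_three]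
  ring

end

/-- HJI stationarity: with Λ ≠ 0 and I* distinct from all players, the
derivative of V in the joint optimal direction (u*_E, u*_1, u*_2, u*_3) vanishes:
(∇_E V)·u*_E + Σᵢ (∇_(P_i) V)·u*_i = 0, with ∇_E V = (ν_E/Λ)(E − I*) and
∇_(P_i) V = −(ν_i/Λ)(P_i − I*). -/
theorem statement10 (xE yE zE x1 y1 z1 x2 y2 z2 x3 y3 z3 : ℝ) (hΛ : Lam xE yE zE x1 y1 z1 x2 y2 z2 x3 y3 z3 ≠ 0)
    (hE : Istar xE yE zE x1 y1 z1 x2 y2 z2 x3 y3 z3 ≠ pt xE yE zE)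
    (h1 : Istar xE yE zE x1 y1 z1 x2 y2 z2 x3 y3 z3 ≠ pt x1 y1 z1)
    (h2 : Istar xE yE zE x1 y1 z1 x2 y2 z2 x3 y3 z3 ≠ pt x2 y2 z2)
    (h3 : Istar xE yE zE x1 y1 z1 x2 y2 z2 x3 y3 z3 ≠ pt x3 y3 z3)
    (dE d1 d2 d3 : ℝ)
    (hdE : dE = ‖Istar xE yE zE x1 y1 z1 x2 y2 z2 x3 y3 z3 - pt xE yE zE‖)
    (hd1 : d1 = ‖Istar xE yE zE x1 y1 z1 x2 y2 z2 x3 y3 z3 - pt x1 y1 z1‖)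
    (hd2 : d2 = ‖Istar xE yE zE x1 y1 z1 x2 y2 z2 x3 y3 z3 - pt x2 y2 z2‖)
    (hd3 : d3 = ‖Istar xE yE zE x1 y1 z1 x2 y2 z2 x3 y3 z3 - pt x3 y3 z3‖)
    (uE u1 u2 u3 : EuclideanSpace ℝ (Fin 3))
    (huE : uE = (1/dE) • (Istar xE yE zE x1 y1 z1 x2 y2 z2 x3 y3 z3 - pt xE yE zE))
    (hu1 : u1 = (1/d1) • (Istar xE yE zE x1 y1 z1 x2 y2 z2 x3 y3 z3 - pt x1 y1 z1))
    (hu2 : u2 = (1/d2) • (Istar xE yE zE x1 y1 z1 x2 y2 z2 x3 y3 z3 - pt x2 y2 z2))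
    (hu3 : u3 = (1/d3) • (Istar xE yE zE x1 y1 z1 x2 y2 z2 x3 y3 z3 - pt x3 y3 z3)) :
    (inner ℝ ((nuE xE yE zE x1 y1 z1 x2 y2 z2 x3 y3 z3 / Lam xE yE zE x1 y1 z1 x2 y2 z2 x3 y3 z3) • (pt xE yE zE - Istar xE yE zE x1 y1 z1 x2 y2 z2 x3 y3 z3)) uE : ℝ)
      + inner ℝ (-(nu1 xE yE zE x1 y1 z1 x2 y2 z2 x3 y3 z3 / Lam xE yE zE x1 y1 z1 x2 y2 z2 x3 y3 z3) • (pt x1 y1 z1 - Istar xE yE zE x1 y1 z1 x2 y2 z2 x3 y3 z3)) u1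
      + inner ℝ (-(nu2 xE yE zE x1 y1 z1 x2 y2 z2 x3 y3 z3 / Lam xE yE zE x1 y1 z1 x2 y2 z2 x3 y3 z3) • (pt x2 y2 z2 - Istar xE yE zE x1 y1 z1 x2 y2 z2 x3 y3 z3)) u2
      + inner ℝ (-(nu3 xE yE zE x1 y1 z1 x2 y2 z2 x3 y3 z3 / Lam xE yE zE x1 y1 z1 x2 y2 z2 x3 y3 z3) • (pt x3 y3 z3 - Istar xE yE zE x1 y1 z1 x2 y2 z2 x3 y3 z3)) u3 = 0 := by
  have hI : Istar xE yE zE x1 y1 z1 x2 y2 z2 x3 y3 z3 = pt (xstar xE yE zE x1 y1 z1 x2 y2 z2 x3 y3 z3) (ystar xE yE zE x1 y1 z1 x2 y2 z2 x3 y3 z3) (zstar xE yE zE x1 y1 z1 x2 y2 z2 x3 y3 z3) := rfl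
  set X := xstar xE yE zE x1 y1 z1 x2 y2 z2 x3 y3 z3 with hX
  set Y := ystar xE yE zE x1 y1 z1 x2 y2 z2 x3 y3 z3 with hY
  set Z := zstar xE yE zE x1 y1 z1 x2 y2 z2 x3 y3 z3 with hZ
  have key1 : (xE-x1)*X + (yE-y1)*Y + (zE-z1)*Z
      = ((xE^2+yE^2+zE^2) - (x1^2+y1^2+z1^2))/2 := by
    rw [hX, hY, hZ]
    simp only [xstar, ystar, zstar]
    field_simp
    simp only [nuE, nu1, nu2, nu3, muE, mu1, mu2, mu3,
      etaE, eta1, eta2, eta3, Lam]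
    ring
  have key2 : (xE-x2)*X + (yE-y2)*Y + (zE-z2)*Z
      = ((xE^2+yE^2+zE^2) - (x2^2+y2^2+z2^2))/2 := by
    rw [hX, hY, hZ]
    simp only [xstar, ystar, zstar]
    field_simp
    simp only [nuE, nu1, nu2, nu3, muE, mu1, mu2, mu3,
      etaE, eta1, eta2, eta3, Lam]
    ring
  have key3 : (xE-x3)*X + (yE-y3)*Y + (zE-z3)*Z
      = ((xE^2+yE^2+zE^2) - (x3^2+y3^2+z3^2))/2 := by
    rw [hX, hY, hZ]
    simp only [xstar, ystar, zstar]
    field_simp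
    simp only [nuE, nu1, nu2, nu3, muE, mu1, mu2, mu3,
      etaE, eta1, eta2, eta3, Lam]
    ring
  have hdE2 : dE^2 = (X-xE)^2 + (Y-yE)^2 + (Z-zE)^2 := by
    rw [hdE, hI, pt_sub', pt_norm_sq']
  have hd12 : d1^2 = (X-x1)^2 + (Y-y1)^2 + (Z-z1)^2 := by
    rw [hd1, hI, pt_sub', pt_norm_sq']
  have hd22 : d2^2 = (X-x2)^2 + (Y-y2)^2 + (Z-z2)^2 := by
    rw [hd2, hI, pt_sub', pt_norm_sq']
  have hd32 : d3^2 = (X-x3)^2 + (Y-y3)^2 + (Z-z3)^2 := by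
    rw [hd3, hI, pt_sub', pt_norm_sq']
  have hdEpos : 0 < dE := by
    rw [hdE]; exact norm_pos_iff.mpr (sub_ne_zero_of_ne hE)
  have hd1pos : 0 < d1 := by
    rw [hd1]; exact norm_pos_iff.mpr (sub_ne_zero_of_ne h1)
  have hd2pos : 0 < d2 := by
    rw [hd2]; exact norm_pos_iff.mpr (sub_ne_zero_of_ne h2)
  have hd3pos : 0 < d3 := by
    rw [hd3]; exact norm_pos_iff.mpr (sub_ne_zero_of_ne h3)
  have e1 : dE^2 = d1^2 := by rw [hdE2, hd12]; linear_combination (-2 : ℝ) * key1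
  have e2 : dE^2 = d2^2 := by rw [hdE2, hd22]; linear_combination (-2 : ℝ) * key2
  have e3 : dE^2 = d3^2 := by rw [hdE2, hd32]; linear_combination (-2 : ℝ) * key3
  have hdEd1 : dE = d1 := by
    rcases mul_eq_zero.1 (show (dE-d1)*(dE+d1) = 0 by linear_combination e1) with h | h
    · linarith
    · linarith
  have hdEd2 : dE = d2 := by
    rcases mul_eq_zero.1 (show (dE-d2)*(dE+d2) = 0 by linear_combination e2) with h | h
    · linarith
    · linarith
  have hdEd3 : dE = d3 := by
    rcases mul_eq_zero.1 (show (dE-d3)*(dE+d3) = 0 by linear_combination e3) with h | h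
    · linarith
    · linarith
  have hsE : (inner ℝ (pt xE yE zE - Istar xE yE zE x1 y1 z1 x2 y2 z2 x3 y3 z3) (Istar xE yE zE x1 y1 z1 x2 y2 z2 x3 y3 z3 - pt xE yE zE) : ℝ) = -dE^2 := by
    rw [hI, pt_sub', pt_sub', inner_pt', hdE2]; ring
  have hs1 : (inner ℝ (pt x1 y1 z1 - Istar xE yE zE x1 y1 z1 x2 y2 z2 x3 y3 z3) (Istar xE yE zE x1 y1 z1 x2 y2 z2 x3 y3 z3 - pt x1 y1 z1) : ℝ) = -d1^2 := by
    rw [hI, pt_sub', pt_sub', inner_pt', hd12]; ring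
  have hs2 : (inner ℝ (pt x2 y2 z2 - Istar xE yE zE x1 y1 z1 x2 y2 z2 x3 y3 z3) (Istar xE yE zE x1 y1 z1 x2 y2 z2 x3 y3 z3 - pt x2 y2 z2) : ℝ) = -d2^2 := by
    rw [hI, pt_sub', pt_sub', inner_pt', hd22]; ring
  have hs3 : (inner ℝ (pt x3 y3 z3 - Istar xE yE zE x1 y1 z1 x2 y2 z2 x3 y3 z3) (Istar xE yE zE x1 y1 z1 x2 y2 z2 x3 y3 z3 - pt x3 y3 z3) : ℝ) = -d3^2 := by
    rw [hI, pt_sub', pt_sub', inner_pt', hd32]; ring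
  have hnu : nuE xE yE zE x1 y1 z1 x2 y2 z2 x3 y3 z3 = nu1 xE yE zE x1 y1 z1 x2 y2 z2 x3 y3 z3 + nu2 xE yE zE x1 y1 z1 x2 y2 z2 x3 y3 z3 + nu3 xE yE zE x1 y1 z1 x2 y2 z2 x3 y3 z3 := by
    simp only [nuE, nu1, nu2, nu3]; ring
  rw [huE, hu1, hu2, hu3]
  simp only [real_inner_smul_left, real_inner_smul_right]
  rw [hsE, hs1, hs2, hs3, ← hdEd1, ← hdEd2, ← hdEd3, hnu]
  field_simp
  ring
end

section
/- (Barrier identity.) If ν_E ≠ 0, then ν_E R_E² − ν_1 R_1² − ν_2 R_2² − ν_3 R_3² = ν_E · B, where B = (x_E−a)² + (y_E−b)² + z_E² − (x_1−a)² − (y_1−b)² − z_1². Equivalently, if in addition Λ ≠ 0 then 2Λ·V = ν_E·B, where V = (ν_E R_E² − ν_1 R_1² − ν_2 R_2² − ν_3 R_3²)/(2Λ). -/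
set_option linter.unusedVariables false

/-- Barrier identity: if ν_E ≠ 0 then
ν_E R_E² − ν₁ R₁² − ν₂ R₂² − ν₃ R₃² = ν_E·B; if moreover Λ ≠ 0 then 2Λ·V = ν_E·B. -/
theorem statement13 (xE yE zE x1 y1 z1 x2 y2 z2 x3 y3 z3 : ℝ) (hν : nuE xE yE zE x1 y1 z1 x2 y2 z2 x3 y3 z3 ≠ 0) :
    nuE xE yE zE x1 y1 z1 x2 y2 z2 x3 y3 z3 * (xE^2 + yE^2 + zE^2) - nu1 xE yE zE x1 y1 z1 x2 y2 z2 x3 y3 z3 * (x1^2 + y1^2 + z1^2)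
        - nu2 xE yE zE x1 y1 z1 x2 y2 z2 x3 y3 z3 * (x2^2 + y2^2 + z2^2) - nu3 xE yE zE x1 y1 z1 x2 y2 z2 x3 y3 z3 * (x3^2 + y3^2 + z3^2)
      = nuE xE yE zE x1 y1 z1 x2 y2 z2 x3 y3 z3 * Bfun xE yE zE x1 y1 z1 x2 y2 z2 x3 y3 z3
    ∧ (Lam xE yE zE x1 y1 z1 x2 y2 z2 x3 y3 z3 ≠ 0 → 2 * Lam xE yE zE x1 y1 z1 x2 y2 z2 x3 y3 z3 * Vval xE yE zE x1 y1 z1 x2 y2 z2 x3 y3 z3 = nuE xE yE zE x1 y1 z1 x2 y2 z2 x3 y3 z3 * Bfun xE yE zE x1 y1 z1 x2 y2 z2 x3 y3 z3) := by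
  constructor
  · unfold nuE nu1 nu2 nu3 Bfun aB bB
    unfold nuE at hν
    field_simp
    ring
  · intro hΛ
    have h1 : nuE xE yE zE x1 y1 z1 x2 y2 z2 x3 y3 z3 * (xE^2 + yE^2 + zE^2) - nu1 xE yE zE x1 y1 z1 x2 y2 z2 x3 y3 z3 * (x1^2 + y1^2 + z1^2)
        - nu2 xE yE zE x1 y1 z1 x2 y2 z2 x3 y3 z3 * (x2^2 + y2^2 + z2^2) - nu3 xE yE zE x1 y1 z1 x2 y2 z2 x3 y3 z3 * (x3^2 + y3^2 + z3^2)
      = nuE xE yE zE x1 y1 z1 x2 y2 z2 x3 y3 z3 * Bfun xE yE zE x1 y1 z1 x2 y2 z2 x3 y3 z3 := by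
      unfold nuE nu1 nu2 nu3 Bfun aB bB
      unfold nuE at hν
      field_simp
      ring
    rw [← h1]
    unfold Vval zstar
    field_simp
end

section
/- (Barrier surface characterization.) If Λ ≠ 0 and ν_E ≠ 0, then the Value V = (ν_E R_E² − ν_1 R_1² − ν_2 R_2² − ν_3 R_3²)/(2Λ) vanishes if and only if the Barrier function B = (x_E−a)² + (y_E−b)² + z_E² − (x_1−a)² − (y_1−b)² − z_1² vanishes; i.e., the state lies on the Barrier surface (where the evader is intercepted exactly as it reaches the goal plane z = 0) exactly when B = 0. -/
set_option linter.unusedVariables false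

/-- Barrier surface characterization: if Λ ≠ 0 and ν_E ≠ 0, then the Value
vanishes if and only if the Barrier function vanishes. -/
theorem statement14 (xE yE zE x1 y1 z1 x2 y2 z2 x3 y3 z3 : ℝ) (hΛ : Lam xE yE zE x1 y1 z1 x2 y2 z2 x3 y3 z3 ≠ 0) (hν : nuE xE yE zE x1 y1 z1 x2 y2 z2 x3 y3 z3 ≠ 0) :
    Vval xE yE zE x1 y1 z1 x2 y2 z2 x3 y3 z3 = 0 ↔ Bfun xE yE zE x1 y1 z1 x2 y2 z2 x3 y3 z3 = 0 := by
  have h2 : (2 : ℝ) * Lam xE yE zE x1 y1 z1 x2 y2 z2 x3 y3 z3 ≠ 0 := mul_ne_zero two_ne_zero hΛ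
  have key : nuE xE yE zE x1 y1 z1 x2 y2 z2 x3 y3 z3 * (xE^2 + yE^2 + zE^2)
      - nu1 xE yE zE x1 y1 z1 x2 y2 z2 x3 y3 z3 * (x1^2 + y1^2 + z1^2)
      - nu2 xE yE zE x1 y1 z1 x2 y2 z2 x3 y3 z3 * (x2^2 + y2^2 + z2^2)
      - nu3 xE yE zE x1 y1 z1 x2 y2 z2 x3 y3 z3 * (x3^2 + y3^2 + z3^2)
      = nuE xE yE zE x1 y1 z1 x2 y2 z2 x3 y3 z3 * Bfun xE yE zE x1 y1 z1 x2 y2 z2 x3 y3 z3 := by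
    unfold nuE nu1 nu2 nu3 Bfun aB bB
    have hν' : x1*(y2-y3) + x2*(y3-y1) + x3*(y1-y2) ≠ 0 := hν
    field_simp
    ring
  unfold Vval zstar
  rw [div_eq_zero_iff]
  constructor
  · rintro (h | h)
    · rw [key] at h
      rcases mul_eq_zero.mp h with h' | h'
      · exact absurd h' hν
      · exact h'
    · exact absurd h h2
  · intro h
    left
    rw [key, h, mul_zero]
end
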